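/- arXiv:2406.18564 — 6 statements merged into one kernel-verified Lean document; each statement's English description precedes it below -/
import Mathlib

section
/- If R ∈ SO(p)ⁿ and Λ is a symmetric p×p-block-diagonal matrix such that ÃR = ΛR (the first-order KKT condition) and Λ − Ã ⪰ 0, then R is a global minimizer of the rotation averaging problem minimize −⟨RRᵀ, Ã⟩ over SO(p)ⁿ, and the duality gap with the dual SDP maximize −Tr(Λ) subject to Λ − Ã ⪰ 0 is zero. -/
open Matrix

/-- The `(i,j)` block of an `np × np` block matrix. -/
def blk {n p : ℕ} (M : Matrix (Fin n × Fin p) (Fin n × Fin p) ℝ) (i j : Fin n) :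
    Matrix (Fin p) (Fin p) ℝ := fun a b => M (i, a) (j, b)

/-- The `i`-th `p × p` block of a stacked `np × p` block column matrix. -/
def blkv {n p : ℕ} (R : Matrix (Fin n × Fin p) (Fin p) ℝ) (i : Fin n) :
    Matrix (Fin p) (Fin p) ℝ := fun a b => R (i, a) b

/-!
Weak duality: for `Q ∈ O(p)ⁿ` the diagonal blocks of `Q Qᵀ` are identities, so a block-diagonal
`Λ` has `tr(Qᵀ Λ Q) = tr(Λ (Q Qᵀ)) = tr Λ`, and `Λ - Ã ⪰ 0` gives
`tr Λ - tr(Qᵀ Ã Q) = tr(Qᵀ (Λ - Ã) Q) ≥ 0`. The KKT condition `Ã R = Λ R` turns this bound into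
an equality at `R`, which is therefore optimal with zero duality gap.
-/

section BlockMatrix

variable {n p : ℕ}

theorem trace_mul_eq_sum_trace_blk_of_blockDiagonal
    {Λ : Matrix (Fin n × Fin p) (Fin n × Fin p) ℝ}
    (hΛ : ∀ i j : Fin n, i ≠ j → blk Λ i j = 0)
    (B : Matrix (Fin n × Fin p) (Fin n × Fin p) ℝ) :
    (Λ * B).trace = ∑ i : Fin n, (blk Λ i i * blk B i i).trace := by
  simp only [trace, diag, mul_apply, Fintype.sum_prod_type, blk]
  refine Finset.sum_congr rfl fun i _ => Finset.sum_congr rfl fun a _ => ?_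
  rw [Finset.sum_comm]
  refine Finset.sum_congr rfl fun b _ => Finset.sum_eq_single i (fun j _ hji => ?_) (by simp)
  simp [show Λ (i, a) (j, b) = 0 from congrFun (congrFun (hΛ i j hji.symm) a) b]

theorem blk_mul_transpose_self (S : Matrix (Fin n × Fin p) (Fin p) ℝ) (i : Fin n) :
    blk (S * Sᵀ) i i = blkv S i * (blkv S i)ᵀ := by
  ext a b
  simp [blk, blkv, mul_apply]

theorem trace_transpose_mul_mul_eq_trace_of_blockDiagonal
    {Λ : Matrix (Fin n × Fin p) (Fin n × Fin p) ℝ}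
    (hΛ : ∀ i j : Fin n, i ≠ j → blk Λ i j = 0)
    {S : Matrix (Fin n × Fin p) (Fin p) ℝ} (hS : ∀ i, (blkv S i)ᵀ * blkv S i = 1) :
    (Sᵀ * Λ * S).trace = Λ.trace := by
  have hSSt : ∀ i, blk (S * Sᵀ) i i = 1 := fun i => by
    rw [blk_mul_transpose_self, mul_eq_one_comm.mp (hS i)]
  calc (Sᵀ * Λ * S).trace = (Λ * (S * Sᵀ)).trace := by
        rw [trace_mul_comm, ← Matrix.mul_assoc, trace_mul_comm]
    _ = ∑ i : Fin n, (blk Λ i i).trace := by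
        simp only [trace_mul_eq_sum_trace_blk_of_blockDiagonal hΛ, hSSt, Matrix.mul_one]
    _ = Λ.trace := by
        simp [trace, diag, Fintype.sum_prod_type, blk]

theorem trace_transpose_mul_mul_le_trace_of_posSemidef_sub
    {A Λ : Matrix (Fin n × Fin p) (Fin n × Fin p) ℝ}
    (hΛ : ∀ i j : Fin n, i ≠ j → blk Λ i j = 0) (hPSD : (Λ - A).PosSemidef)
    {Q : Matrix (Fin n × Fin p) (Fin p) ℝ} (hQ : ∀ i, (blkv Q i)ᵀ * blkv Q i = 1) :
    (Qᵀ * A * Q).trace ≤ Λ.trace := by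
  have hgap : 0 ≤ (Qᵀ * (Λ - A) * Q).trace := by
    simpa using (hPSD.conjTranspose_mul_mul_same Q).trace_nonneg
  rw [Matrix.mul_sub, Matrix.sub_mul, trace_sub,
    trace_transpose_mul_mul_eq_trace_of_blockDiagonal hΛ hQ] at hgap
  linarith

end BlockMatrix

theorem stmt3_general {n p : ℕ}
    (A Λ : Matrix (Fin n × Fin p) (Fin n × Fin p) ℝ)
    (hΛdiag : ∀ i j : Fin n, i ≠ j → blk Λ i j = 0)
    (R : Matrix (Fin n × Fin p) (Fin p) ℝ)
    (hR : ∀ i : Fin n, (blkv R i)ᵀ * blkv R i = 1 ∧ (blkv R i).det = 1)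
    (hKKT : A * R = Λ * R)
    (hPSD : (Λ - A).PosSemidef) :
    (∀ Q : Matrix (Fin n × Fin p) (Fin p) ℝ,
        (∀ i : Fin n, (blkv Q i)ᵀ * blkv Q i = 1 ∧ (blkv Q i).det = 1) →
        -(Rᵀ * A * R).trace ≤ -(Qᵀ * A * Q).trace) ∧
      -(Rᵀ * A * R).trace = -Λ.trace := by
  have hRval : (Rᵀ * A * R).trace = Λ.trace := by
    rw [Matrix.mul_assoc, hKKT, ← Matrix.mul_assoc]
    exact trace_transpose_mul_mul_eq_trace_of_blockDiagonal hΛdiag fun i => (hR i).1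
  refine ⟨fun Q hQ => ?_, by rw [hRval]⟩
  rw [hRval, neg_le_neg_iff]
  exact trace_transpose_mul_mul_le_trace_of_posSemidef_sub hΛdiag hPSD fun i => (hQ i).1

/-- If `R ∈ SO(p)ⁿ` and a symmetric block-diagonal `Λ` satisfy the KKT condition
`Ã R = Λ R` with `Λ - Ã ⪰ 0`, then `R` is a global minimizer of rotation
averaging and the duality gap with the dual SDP is zero. -/
theorem stmt3 {n p : ℕ}
    (A Λ : Matrix (Fin n × Fin p) (Fin n × Fin p) ℝ)
    (hA : Aᵀ = A) (hAdiag : ∀ i : Fin n, blk A i i = 0)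
    (hΛsym : Λᵀ = Λ) (hΛdiag : ∀ i j : Fin n, i ≠ j → blk Λ i j = 0)
    (R : Matrix (Fin n × Fin p) (Fin p) ℝ)
    (hR : ∀ i : Fin n, (blkv R i)ᵀ * blkv R i = 1 ∧ (blkv R i).det = 1)
    (hKKT : A * R = Λ * R)
    (hPSD : (Λ - A).PosSemidef) :
    (∀ Q : Matrix (Fin n × Fin p) (Fin p) ℝ,
        (∀ i : Fin n, (blkv Q i)ᵀ * blkv Q i = 1 ∧ (blkv Q i).det = 1) →
        -(Rᵀ * A * R).trace ≤ -(Qᵀ * A * Q).trace) ∧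
      -(Rᵀ * A * R).trace = -Λ.trace :=
  stmt3_general A Λ hΛdiag R hR hKKT hPSD
end

section
/- The dual iterates of the Generalized Power Method are monotonically increasing in trace: if Λ_{(k)} R_{(k+1)} = Ã R_{(k)} with R_{(k)}, R_{(k+1)} ∈ SO(p)ⁿ and Λ_{(k)} the block-diagonal matrix whose i-th block is U_i Σ_i U_iᵀ from the SVD of (ÃR_{(k)})_i = U_iΣ_iV_iᵀ, then Tr(Λ_{(k+1)}) ≥ Tr(Λ_{(k)}). -/
/-!
Let `Q = R₀ R₂ᵀ`. Using the two recursions and the symmetry of `Ã` and `Λ_{k+1}`,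
`Tr Λ_k = Tr(Λ_k R₁ R₁ᵀ) = Tr(R₁ᵀ Ã R₀) = Tr(R₂ᵀ Λ_{k+1} R₀) = Tr(Λ_{k+1} Q)`, where the first
step uses that `Λ_k` is block diagonal and the blocks of `R₁` are orthogonal. Since `Λ_{k+1}` is
block diagonal, only the diagonal blocks `Qᵢ = R₀ᵢ R₂ᵢᵀ` of `Q` matter, and these are orthogonal.
For a PSD matrix `L` and an orthogonal `Q`, `Tr(L Q) ≤ Tr L`, because
`0 ≤ Tr((1 - Qᵀ) L (1 - Qᵀ)ᵀ) = 2 Tr L - 2 Tr(L Q)`.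
-/

open Matrix
open scoped ComplexOrder

theorem Matrix.PosSemidef.re_trace_mul_le_re_trace {m 𝕜 : Type*} [Fintype m] [DecidableEq m]
    [RCLike 𝕜] {L Q : Matrix m m 𝕜} (hL : L.PosSemidef) (hQ : Q ∈ unitaryGroup m 𝕜) :
    RCLike.re (L * Q).trace ≤ RCLike.re L.trace := by
  have hQQ : Q * Qᴴ = 1 := Unitary.mul_star_self_of_mem hQ
  have hconj : (Qᴴ * L).trace = star (L * Q).trace := by
    rw [← trace_conjTranspose, conjTranspose_mul, hL.isHermitian.eq]
  have hsandwich : (Qᴴ * L * Q).trace = L.trace := by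
    rw [trace_mul_cycle, hQQ, one_mul]
  have hexpand : (1 - Qᴴ) * L * (1 - Qᴴ)ᴴ = L - L * Q - Qᴴ * L + Qᴴ * L * Q := by
    rw [conjTranspose_sub, conjTranspose_one, conjTranspose_conjTranspose]
    noncomm_ring
  have hnonneg := (hL.mul_mul_conjTranspose_same (1 - Qᴴ)).trace_nonneg
  rw [hexpand, trace_add, trace_sub, trace_sub, hconj, hsandwich] at hnonneg
  have hre := (RCLike.nonneg_iff.mp hnonneg).1
  simp only [map_add, map_sub, RCLike.star_def, RCLike.conj_re] at hre
  linarith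

lemma trace_eq_sum_trace_blk {n p : ℕ} (M : Matrix (Fin n × Fin p) (Fin n × Fin p) ℝ) :
    M.trace = ∑ i, (blk M i i).trace := by
  simp only [trace, diag, blk, Fintype.sum_prod_type]

lemma trace_mul_eq_sum_trace_blk {n p : ℕ} {Λ : Matrix (Fin n × Fin p) (Fin n × Fin p) ℝ}
    (hΛ : ∀ i j : Fin n, i ≠ j → blk Λ i j = 0) (M : Matrix (Fin n × Fin p) (Fin n × Fin p) ℝ) :
    (Λ * M).trace = ∑ i, (blk Λ i i * blk M i i).trace := by
  rw [trace_eq_sum_trace_blk]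
  refine Finset.sum_congr rfl fun i _ => congrArg trace ?_
  ext a b
  simp only [blk, mul_apply, Fintype.sum_prod_type]
  rw [Finset.sum_eq_single i]
  · intro j _ hji
    have hzero : ∀ c, Λ (i, a) (j, c) = 0 := fun c => congrFun (congrFun (hΛ i j hji.symm) a) c
    simp [hzero]
  · simp

lemma blk_mul_transpose {n p : ℕ} (R S : Matrix (Fin n × Fin p) (Fin p) ℝ) (i j : Fin n) :
    blk (R * Sᵀ) i j = blkv R i * (blkv S j)ᵀ := rfl

lemma trace_eq_trace_mul_mul_transpose {n p : ℕ} {Λ : Matrix (Fin n × Fin p) (Fin n × Fin p) ℝ}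
    (hΛ : ∀ i j : Fin n, i ≠ j → blk Λ i j = 0) {R : Matrix (Fin n × Fin p) (Fin p) ℝ}
    (hR : ∀ i : Fin n, (blkv R i)ᵀ * blkv R i = 1) :
    Λ.trace = (Λ * (R * Rᵀ)).trace := by
  rw [trace_mul_eq_sum_trace_blk hΛ, trace_eq_sum_trace_blk]
  refine Finset.sum_congr rfl fun i _ => ?_
  rw [blk_mul_transpose, mul_eq_one_comm.mp (hR i), mul_one]

lemma trace_eq_trace_mul_of_recursion {n p : ℕ}
    {A Λ Λ' : Matrix (Fin n × Fin p) (Fin n × Fin p) ℝ} (hA : Aᵀ = A) (hΛ' : Λ'ᵀ = Λ')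
    (hΛ : ∀ i j : Fin n, i ≠ j → blk Λ i j = 0) {R₀ R₁ R₂ : Matrix (Fin n × Fin p) (Fin p) ℝ}
    (hR₁ : ∀ i : Fin n, (blkv R₁ i)ᵀ * blkv R₁ i = 1)
    (hrec₀ : Λ * R₁ = A * R₀) (hrec₁ : Λ' * R₂ = A * R₁) :
    Λ.trace = (Λ' * (R₀ * R₂ᵀ)).trace := by
  have hrec₁' : R₁ᵀ * A = R₂ᵀ * Λ' := by
    simpa only [transpose_mul, hA, hΛ'] using congrArg transpose hrec₁.symm
  calc Λ.trace = (Λ * R₁ * R₁ᵀ).trace := by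
        rw [Matrix.mul_assoc, ← trace_eq_trace_mul_mul_transpose hΛ hR₁]
    _ = (R₁ᵀ * A * R₀).trace := by rw [hrec₀, trace_mul_cycle, Matrix.mul_assoc]
    _ = (Λ' * (R₀ * R₂ᵀ)).trace := by
        rw [hrec₁', trace_mul_cycle, trace_mul_cycle, Matrix.mul_assoc]

theorem stmt5_general {n p : ℕ}
    (A : Matrix (Fin n × Fin p) (Fin n × Fin p) ℝ) (hA : Aᵀ = A)
    (Λk Λk1 : Matrix (Fin n × Fin p) (Fin n × Fin p) ℝ)
    (hΛk1 : Λk1.PosSemidef)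
    (hΛkdiag : ∀ i j : Fin n, i ≠ j → blk Λk i j = 0)
    (hΛk1diag : ∀ i j : Fin n, i ≠ j → blk Λk1 i j = 0)
    (R0 R1 R2 : Matrix (Fin n × Fin p) (Fin p) ℝ)
    (hR0 : ∀ i : Fin n, (blkv R0 i)ᵀ * blkv R0 i = 1 ∧ (blkv R0 i).det = 1)
    (hR1 : ∀ i : Fin n, (blkv R1 i)ᵀ * blkv R1 i = 1 ∧ (blkv R1 i).det = 1)
    (hR2 : ∀ i : Fin n, (blkv R2 i)ᵀ * blkv R2 i = 1 ∧ (blkv R2 i).det = 1)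
    (hrec0 : Λk * R1 = A * R0) (hrec1 : Λk1 * R2 = A * R1) :
    Λk.trace ≤ Λk1.trace := by
  have hΛk1symm : Λk1ᵀ = Λk1 := by
    simpa only [conjTranspose_eq_transpose_of_trivial] using hΛk1.isHermitian.eq
  have hblock (i : Fin n) :
      (blk Λk1 i i * blk (R0 * R2ᵀ) i i).trace ≤ (blk Λk1 i i).trace := by
    have hQ : blkv R0 i * star (blkv R2 i) ∈ unitaryGroup (Fin p) ℝ :=
      mul_mem (mem_unitaryGroup_iff'.mpr (hR0 i).1)
        (Unitary.star_mem (mem_unitaryGroup_iff'.mpr (hR2 i).1))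
    have h := (hΛk1.submatrix (Prod.mk i)).re_trace_mul_le_re_trace hQ
    simp only [star_eq_conjTranspose, conjTranspose_eq_transpose_of_trivial,
      RCLike.re_to_real] at h
    exact h
  rw [trace_eq_trace_mul_of_recursion hA hΛk1symm hΛkdiag (fun i => (hR1 i).1) hrec0 hrec1,
    trace_mul_eq_sum_trace_blk hΛk1diag, trace_eq_sum_trace_blk Λk1]
  exact Finset.sum_le_sum fun i _ => hblock i

/-- The dual iterates of the Generalized Power Method are monotonically
increasing in trace: if `Λₖ R_{k+1} = Ã R_k` and `Λ_{k+1} R_{k+2} = Ã R_{k+1}`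
with the `Λ`'s block-diagonal positive semidefinite (as produced by the
blockwise SVD `UΣUᵀ`) and the `R`'s in `SO(p)ⁿ`, then `Tr(Λ_{k+1}) ≥ Tr(Λₖ)`. -/
theorem stmt5 {n p : ℕ}
    (A : Matrix (Fin n × Fin p) (Fin n × Fin p) ℝ) (hA : Aᵀ = A)
    (Λk Λk1 : Matrix (Fin n × Fin p) (Fin n × Fin p) ℝ)
    (hΛk : Λk.PosSemidef) (hΛk1 : Λk1.PosSemidef)
    (hΛkdiag : ∀ i j : Fin n, i ≠ j → blk Λk i j = 0)
    (hΛk1diag : ∀ i j : Fin n, i ≠ j → blk Λk1 i j = 0)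
    (R0 R1 R2 : Matrix (Fin n × Fin p) (Fin p) ℝ)
    (hR0 : ∀ i : Fin n, (blkv R0 i)ᵀ * blkv R0 i = 1 ∧ (blkv R0 i).det = 1)
    (hR1 : ∀ i : Fin n, (blkv R1 i)ᵀ * blkv R1 i = 1 ∧ (blkv R1 i).det = 1)
    (hR2 : ∀ i : Fin n, (blkv R2 i)ᵀ * blkv R2 i = 1 ∧ (blkv R2 i).det = 1)
    (hrec0 : Λk * R1 = A * R0) (hrec1 : Λk1 * R2 = A * R1) :
    Λk.trace ≤ Λk1.trace :=
  stmt5_general A hA Λk Λk1 hΛk1 hΛkdiag hΛk1diag R0 R1 R2 hR0 hR1 hR2 hrec0 hrec1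
end

section
/- Let γ ∈ [−π, π] and n ≥ 1. Among all choices of angles θ₁,…,θₙ subject to Σθᵢ ≡ γ (mod 2π), the maximum of Σ cos(θᵢ) is n·cos(γ/n), attained at θᵢ = γ/n for all i. -/
open Real

lemma pair_lemma (x y : ℝ) : ∃ r : ℝ, ∃ m : ℤ,
    |r| ≤ π/2 ∧ x + y = 2*r + 2*π*m ∧ Real.cos x + Real.cos y ≤ 2 * Real.cos r := by
  have hπ : (0:ℝ) < π := Real.pi_pos
  set p := (x + y)/2 with hp
  set r := toIocMod hπ (-(π/2)) p with hr
  obtain ⟨hr1, hr2⟩ := Set.mem_Ioc.1 (toIocMod_mem_Ioc hπ (-(π/2)) p)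
  have hr2' : r ≤ π/2 := by rw [hr] ; linarith
  have hr1' : -(π/2) ≤ r := le_of_lt hr1
  have hcosr : 0 ≤ Real.cos r := Real.cos_nonneg_of_mem_Icc ⟨hr1', hr2'⟩
  set k := toIocDiv hπ (-(π/2)) p with hk
  have hpk : r + (k : ℤ) • π = p := toIocMod_add_toIocDiv_zsmul hπ _ _
  have hpk' : p = r + k * π := by rw [← hpk]; push_cast [zsmul_eq_mul]; ring
  have hcosp : |Real.cos p| = Real.cos r := by
    rw [hpk', Real.cos_add_int_mul_pi, abs_mul]
    rcases Int.even_or_odd k with he | ho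
    · rw [he.neg_one_zpow]; simp [abs_of_nonneg hcosr]
    · rw [ho.neg_one_zpow]; simp [abs_of_nonneg hcosr]
  refine ⟨r, k, abs_le.2 ⟨hr1', hr2'⟩, by rw [hp] at hpk'; linarith, ?_⟩
  have h1 : Real.cos x + Real.cos y = 2 * Real.cos p * Real.cos ((x - y)/2) := by
    rw [Real.cos_add_cos]
  have h2 : |Real.cos ((x-y)/2)| ≤ 1 := Real.abs_cos_le_one _
  have h3 : Real.cos p * Real.cos ((x-y)/2) ≤ |Real.cos p| * |Real.cos ((x-y)/2)| := by
    calc Real.cos p * Real.cos ((x-y)/2) ≤ |Real.cos p * Real.cos ((x-y)/2)| := le_abs_self _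
    _ = |Real.cos p| * |Real.cos ((x-y)/2)| := abs_mul _ _
  have h4 : |Real.cos p| * |Real.cos ((x-y)/2)| ≤ |Real.cos p| := by
    nlinarith [abs_nonneg (Real.cos p)]
  rw [h1, hcosp] at *
  nlinarith

lemma smooth_lemma : ∀ n : ℕ, 2 ≤ n → ∀ θ : Fin n → ℝ,
    ∃ θ' : Fin n → ℝ, ∃ m : ℤ, (∀ i, |θ' i| ≤ π/2) ∧
      (∑ i, θ' i) = (∑ i, θ i) + 2*π*m ∧
      (∑ i, Real.cos (θ i)) ≤ ∑ i, Real.cos (θ' i) := by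
  intro n hn
  induction n, hn using Nat.le_induction with
  | base =>
    intro θ
    obtain ⟨r, m, hr, hsum, hcos⟩ := pair_lemma (θ 0) (θ 1)
    refine ⟨fun _ => r, -m, fun i => hr, ?_, ?_⟩
    · rw [Fin.sum_univ_two, Fin.sum_univ_two]
      push_cast
      linarith
    · rw [Fin.sum_univ_two, Fin.sum_univ_two]
      linarith
  | succ n hn2 IH =>
    intro θ
    obtain ⟨φ, m₁, hφ, hφsum, hφcos⟩ := IH (fun i => θ i.succ)
    have hn0 : 0 < n := by omega
    let i0 : Fin n := ⟨0, hn0⟩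
    obtain ⟨r, m₂, hr, hrsum, hrcos⟩ := pair_lemma (θ 0) (φ i0)
    refine ⟨Fin.cons r (Function.update φ i0 r), m₁ - m₂, ?_, ?_, ?_⟩
    · intro i
      refine Fin.cases ?_ ?_ i
      · exact hr
      · intro j
        simp only [Fin.cons_succ]
        rcases eq_or_ne j i0 with h | h
        · subst h; rw [Function.update_self]; exact hr
        · rw [Function.update_of_ne h]; exact hφ j
    · rw [Fin.sum_univ_succ, Fin.sum_univ_succ]
      simp only [Fin.cons_zero, Fin.cons_succ]
      have hupd : ∑ i : Fin n, Function.update φ i0 r i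
          = ∑ i : Fin n, φ i - φ i0 + r := by
        rw [Finset.sum_update_of_mem (Finset.mem_univ i0), ← Finset.erase_eq,
          ← Finset.add_sum_erase _ φ (Finset.mem_univ i0)]
        ring
      rw [hupd]
      push_cast
      linarith
    · rw [Fin.sum_univ_succ, Fin.sum_univ_succ]
      simp only [Fin.cons_zero, Fin.cons_succ]
      have hupd : ∑ i : Fin n, Real.cos (Function.update φ i0 r i)
          = ∑ i : Fin n, Real.cos (φ i) - Real.cos (φ i0) + Real.cos r := by
        have : ∀ i : Fin n, Real.cos (Function.update φ i0 r i)
            = Function.update (fun j => Real.cos (φ j)) i0 (Real.cos r) i := by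
          intro i
          exact (Function.apply_update (fun _ x => Real.cos x) φ i0 r i)
        rw [Finset.sum_congr rfl (fun i _ => this i),
          Finset.sum_update_of_mem (Finset.mem_univ i0), ← Finset.erase_eq,
          ← Finset.add_sum_erase _ (fun j => Real.cos (φ j)) (Finset.mem_univ i0)]
        ring
      rw [hupd]
      linarith

/-- For `γ ∈ [-π, π]` and `n ≥ 1`, among all angles `θ₁,…,θₙ` with
`Σθᵢ ≡ γ (mod 2π)`, the maximum of `Σ cos θᵢ` is `n cos(γ/n)`,
attained at `θᵢ = γ/n`. -/
theorem stmt9 (n : ℕ) (hn : 1 ≤ n) (γ : ℝ) (hγ : γ ∈ Set.Icc (-π) π) :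
    IsGreatest
      {s : ℝ | ∃ θ : Fin n → ℝ,
        (∃ m : ℤ, ∑ i, θ i = γ + 2 * π * m) ∧ s = ∑ i, Real.cos (θ i)}
      ((n : ℝ) * Real.cos (γ / n)) := by
  have hπ : (0:ℝ) < π := Real.pi_pos
  have hn0 : (0:ℝ) < n := by exact_mod_cast hn
  obtain ⟨hγ1, hγ2⟩ := hγ
  constructor
  · refine ⟨fun _ => γ / n, ⟨0, ?_⟩, ?_⟩
    · simp [Finset.sum_const, Finset.card_univ]
      field_simp
    · simp [Finset.sum_const, Finset.card_univ, mul_comm]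
  · rintro s ⟨θ, ⟨m, hsum⟩, rfl⟩
    rcases eq_or_lt_of_le hn with h1 | h2
    · -- n = 1
      have hn1 : n = 1 := h1.symm
      subst hn1
      rw [Fin.sum_univ_one] at hsum ⊢
      rw [hsum]
      have hcg : Real.cos (γ + 2*π*m) = Real.cos γ := by
        rw [show γ + 2*π*(m:ℝ) = γ + (m:ℤ)*(2*π) by push_cast; ring,
          Real.cos_add_int_mul_two_pi]
      rw [hcg]
      norm_num
    · -- n ≥ 2
      have hn2 : 2 ≤ n := h2
      obtain ⟨θ', m', hθ'bd, hθ'sum, hθ'cos⟩ := smooth_lemma n hn2 θ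
      set M : ℤ := m + m' with hM
      have hS : ∑ i, θ' i = γ + 2*π*M := by push_cast [hM]; linarith
      -- Jensen
      have hconc := strictConcaveOn_cos_Icc.concaveOn
      have hjen := hconc.le_map_sum (t := Finset.univ) (w := fun _ : Fin n => (n:ℝ)⁻¹)
        (p := θ') (fun i _ => by positivity)
        (by simp [Finset.sum_const, Finset.card_univ]; field_simp)
        (fun i _ => Set.mem_Icc.2 (abs_le.1 (hθ'bd i)))
      simp only [smul_eq_mul, ← Finset.mul_sum] at hjen
      -- hjen : n⁻¹ * ∑ cos θ' ≤ cos (n⁻¹ * ∑ θ')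
      have hmean : Real.cos ((n:ℝ)⁻¹ * ∑ i, θ' i) ≤ Real.cos (γ / n) := by
        have hmb : |(n:ℝ)⁻¹ * ∑ i, θ' i| ≤ π/2 := by
          rw [abs_mul, abs_of_nonneg (by positivity : (0:ℝ) ≤ (n:ℝ)⁻¹)]
          have : |∑ i, θ' i| ≤ ∑ i : Fin n, (π/2) :=
            le_trans (Finset.abs_sum_le_sum_abs _ _) (Finset.sum_le_sum fun i _ => hθ'bd i)
          rw [Finset.sum_const, Finset.card_univ, Fintype.card_fin, nsmul_eq_mul] at this
          calc (n:ℝ)⁻¹ * |∑ i, θ' i| ≤ (n:ℝ)⁻¹ * ((n:ℝ) * (π/2)) := by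
                exact mul_le_mul_of_nonneg_left this (by positivity)
            _ = π/2 := by field_simp
        have hger : |γ| ≤ |γ + 2*π*M| := by
          rcases eq_or_ne M 0 with h | h
          · simp [h]
          · have h1 : (1:ℝ) ≤ |(M:ℝ)| := by
              have := Int.one_le_abs h
              calc (1:ℝ) = ((1:ℤ):ℝ) := by norm_num
                _ ≤ ((|M|:ℤ):ℝ) := by exact_mod_cast this
                _ = |(M:ℝ)| := by push_cast; ring
            have h2 : |2*π*(M:ℝ)| = 2*π*|(M:ℝ)| := by
              rw [abs_mul, abs_of_nonneg (by positivity : (0:ℝ) ≤ 2*π)]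
            have h3 : |2*π*(M:ℝ)| - |γ| ≤ |γ + 2*π*M| := by
              have := abs_sub_abs_le_abs_sub (2*π*(M:ℝ) + γ) γ
              simp only [add_sub_cancel_right] at this
              calc |2*π*(M:ℝ)| - |γ| ≤ |2*π*(M:ℝ) + γ| := by
                    have h4 := abs_add_le (2*π*(M:ℝ) + γ) (-γ)
                    simp only [add_neg_cancel_right, abs_neg] at h4
                    linarith
                _ = |γ + 2*π*M| := by ring_nf
            have hγa : |γ| ≤ π := abs_le.2 ⟨hγ1, hγ2⟩
            nlinarith
        rw [← hS] at hger
        calc Real.cos ((n:ℝ)⁻¹ * ∑ i, θ' i) = Real.cos (|(n:ℝ)⁻¹ * ∑ i, θ' i|) :=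
              (Real.cos_abs _).symm
          _ ≤ Real.cos (|γ| / n) := by
              apply Real.cos_le_cos_of_nonneg_of_le_pi (by positivity)
                (by linarith) ?_
              rw [abs_mul, abs_of_nonneg (by positivity : (0:ℝ) ≤ (n:ℝ)⁻¹)]
              rw [div_le_iff₀ hn0] at *
              calc |γ| ≤ |∑ i, θ' i| := hger
                _ = (n:ℝ)⁻¹ * |∑ i, θ' i| * n := by field_simp
          _ = Real.cos (γ / n) := by
              rw [show |γ| / (n:ℝ) = |γ / n| by
                rw [abs_div, abs_of_nonneg (le_of_lt hn0)], Real.cos_abs]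
      calc ∑ i, Real.cos (θ i) ≤ ∑ i, Real.cos (θ' i) := hθ'cos
        _ = n * ((n:ℝ)⁻¹ * ∑ i, Real.cos (θ' i)) := by field_simp
        _ ≤ n * Real.cos ((n:ℝ)⁻¹ * ∑ i, θ' i) := by
            exact mul_le_mul_of_nonneg_left hjen (le_of_lt hn0)
        _ ≤ n * Real.cos (γ / n) := mul_le_mul_of_nonneg_left hmean (le_of_lt hn0)
end

section
/- For the n-cycle connection adjacency Ã' with identity blocks on cycle edges except one edge carrying E ∈ SO(3) with rotation angle γ, the block vector V^k = [E_k^0; E_k^1; …; E_k^{n−1}] spans an invariant subspace: Ã'V^k = V^k(E_k + E_kᵀ), where E_k is any n-th root of E with E_kⁿ = E. -/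
open Matrix

/-- For the canonical `n`-cycle connection adjacency `Ã'` (identity blocks on
cycle edges except one edge carrying the cycle error `E`), the block vector
`V^k = [E_k⁰; E_k¹; …; E_k^{n-1}]`, where `E_kⁿ = E`, spans an invariant
subspace: `Ã' V^k = V^k (E_k + E_kᵀ)`. -/
theorem stmt13 (n : ℕ) (hn : 3 ≤ n)
    (E Ek : Matrix (Fin 3) (Fin 3) ℝ)
    (hEk : Ekᵀ * Ek = 1 ∧ Ek.det = 1) (hEkn : Ek ^ n = E)
    (A' : Matrix (Fin n × Fin 3) (Fin n × Fin 3) ℝ)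
    (hA' : ∀ i j : Fin n, blk A' i j =
      if (i.1 + 1) % n = j.1 then (if i.1 = n - 1 then E else 1)
      else if (j.1 + 1) % n = i.1 then (if j.1 = n - 1 then Eᵀ else 1) else 0)
    (V : Matrix (Fin n × Fin 3) (Fin 3) ℝ)
    (hV : ∀ (x : Fin n × Fin 3) (b : Fin 3), V x b = (Ek ^ x.1.1) x.2 b) :
    A' * V = V * (Ek + Ekᵀ) := by
  obtain ⟨hE1, _⟩ := hEk
  have hEk' : Ek * Ekᵀ = 1 := mul_eq_one_comm.mp hE1
  have hpowT : ∀ m : ℕ, (Ek ^ m)ᵀ * Ek ^ m = 1 := by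
    intro m
    induction m with
    | zero => simp
    | succ k ih =>
      rw [pow_succ, Matrix.transpose_mul, Matrix.mul_assoc,
        ← Matrix.mul_assoc (Ek ^ k)ᵀ, ih, Matrix.one_mul, hE1]
  have hstep : ∀ m : ℕ, Ek ^ (m + 1) * Ekᵀ = Ek ^ m := by
    intro m; rw [pow_succ, Matrix.mul_assoc, hEk', Matrix.mul_one]
  have hpowstep : ∀ m : ℕ, 1 ≤ m → Ek ^ m * Ekᵀ = Ek ^ (m - 1) := by
    intro m hm
    rw [show m = m - 1 + 1 from by omega, hstep, Nat.add_sub_cancel]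
  have hTpow : ∀ m : ℕ, (Ek ^ (m + 1))ᵀ * Ek ^ m = Ekᵀ := by
    intro m
    rw [pow_succ, Matrix.transpose_mul, Matrix.mul_assoc, hpowT, Matrix.mul_one]
  have hnpos : 0 < n := by omega
  have hmodval : ∀ m : ℕ, m < n → (m + 1) % n = if m = n - 1 then 0 else m + 1 := by
    intro m hm
    split
    · next h => rw [show m + 1 = n from by omega, Nat.mod_self]
    · exact Nat.mod_eq_of_lt (by omega)
  ext ⟨i, a⟩ b
  rw [Matrix.mul_apply, Matrix.mul_apply, Fintype.sum_prod_type]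
  have hblk : ∀ (j : Fin n) (c : Fin 3), A' (i, a) (j, c) = blk A' i j a c := fun _ _ => rfl
  simp only [hblk, hV]
  have hsum : ∀ j : Fin n, (∑ c, blk A' i j a c * (Ek ^ j.1) c b)
      = ((blk A' i j) * (Ek ^ j.1)) a b := fun j => (Matrix.mul_apply).symm
  rw [Finset.sum_congr rfl (fun j _ => hsum j)]
  have hi := i.2
  let jp : Fin n := ⟨(i.1 + 1) % n, Nat.mod_lt _ hnpos⟩
  let jm : Fin n := ⟨(i.1 + n - 1) % n, Nat.mod_lt _ hnpos⟩
  have hjp : (jp : ℕ) = (i.1 + 1) % n := rfl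
  have hjm : (jm : ℕ) = (i.1 + n - 1) % n := rfl
  have hp : (i.1 + 1) % n = if i.1 = n - 1 then 0 else i.1 + 1 := hmodval i.1 hi
  have hm : (i.1 + n - 1) % n = if i.1 = 0 then n - 1 else i.1 - 1 := by
    split
    · next h => rw [h, Nat.zero_add, Nat.mod_eq_of_lt (by omega)]
    · next h =>
        rw [show i.1 + n - 1 = n + (i.1 - 1) from by omega, Nat.add_mod_left,
          Nat.mod_eq_of_lt (by omega)]
  have hne : jp ≠ jm := by
    intro h
    have h2 := congrArg Fin.val h
    rw [hjp, hjm, hp, hm] at h2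
    split at h2 <;> split at h2 <;> omega
  have hzero : ∀ j ∈ Finset.univ, j ≠ jp ∧ j ≠ jm → ((blk A' i j) * (Ek ^ j.1)) a b = 0 := by
    intro j _ ⟨h1, h2⟩
    have hj := j.2
    have h1' : j.1 ≠ (i.1 + 1) % n := fun h => h1 (Fin.ext (h.trans hjp.symm))
    have h2' : j.1 ≠ (i.1 + n - 1) % n := fun h => h2 (Fin.ext (h.trans hjm.symm))
    have hq : (j.1 + 1) % n = if j.1 = n - 1 then 0 else j.1 + 1 := hmodval j.1 hj
    rw [hA', if_neg (fun h => h1' h.symm), if_neg, Matrix.zero_mul, Matrix.zero_apply]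
    intro h
    apply h2'
    rw [hm]
    rw [hq] at h
    split at h <;> split <;> omega
  rw [Finset.sum_eq_add_of_mem jp jm (Finset.mem_univ _) (Finset.mem_univ _) hne hzero]
  have hbp : blk A' i jp = if i.1 = n - 1 then E else 1 := by
    rw [hA', hjp, if_pos rfl]
  have hbm : blk A' i jm = if i.1 = 0 then Eᵀ else 1 := by
    have hne' : ¬ (i.1 + 1) % n = (i.1 + n - 1) % n := by
      rw [hp, hm]
      intro h
      split at h <;> split at h <;> omega
    have hcyc : ((i.1 + n - 1) % n + 1) % n = i.1 := by
      rw [hm]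
      split
      · next h => rw [show n - 1 + 1 = n from by omega, Nat.mod_self, h]
      · rw [show i.1 - 1 + 1 = i.1 from by omega, Nat.mod_eq_of_lt hi]
    have hiff : ((i.1 + n - 1) % n = n - 1) ↔ (i.1 = 0) := by
      rw [hm]; split <;> omega
    rw [hA', hjm, if_neg hne', if_pos hcyc, if_congr hiff rfl rfl]
  have hrhs : (∑ c, (Ek ^ i.1) a c * (Ek + Ekᵀ) c b)
      = ((Ek ^ (i.1 + 1)) + (Ek ^ i.1) * Ekᵀ) a b := by
    rw [← Matrix.mul_apply, Matrix.mul_add, pow_succ]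
  rw [hrhs, hbp, hbm, ← Matrix.add_apply]
  have key : (if i.1 = n - 1 then E else 1) * Ek ^ (jp : ℕ)
      + (if i.1 = 0 then Eᵀ else 1) * Ek ^ (jm : ℕ)
      = Ek ^ (i.1 + 1) + Ek ^ i.1 * Ekᵀ := by
    rcases eq_or_ne i.1 (n - 1) with h | h
    · have hjpv : (jp : ℕ) = 0 := by rw [hjp, hp, if_pos h]
      have hjmv : (jm : ℕ) = i.1 - 1 := by rw [hjm, hm, if_neg (by omega)]
      rw [if_pos h, if_neg (by omega), hjpv, hjmv, pow_zero, Matrix.mul_one,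
        Matrix.one_mul, ← hEkn, hpowstep i.1 (by omega)]
      congr 2
      omega
    · have hjpv : (jp : ℕ) = i.1 + 1 := by rw [hjp, hp, if_neg h]
      rw [if_neg h, Matrix.one_mul, hjpv]
      rcases eq_or_ne i.1 0 with h0 | h0
      · have hjmv : (jm : ℕ) = n - 1 := by rw [hjm, hm, if_pos h0]
        rw [if_pos h0, hjmv, h0, pow_zero, Matrix.one_mul]
        congr 1
        rw [← hEkn, show n = n - 1 + 1 from by omega, Nat.add_sub_cancel, hTpow]
      · have hjmv : (jm : ℕ) = i.1 - 1 := by rw [hjm, hm, if_neg h0]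
        rw [if_neg h0, Matrix.one_mul, hjmv, hpowstep i.1 (by omega)]
  exact congrFun (congrFun key a) b
end

section
/- In a cycle graph with SO(3) measurements, the point R₁* = I, R_i* = (∏_{s=1}^{i−1} R̃_{s,s+1})ᵀ E₀^{i−1} for i = 2,…,n, where E₀ is the n-th root of the cycle error E with angle γ/n, is a global minimizer of the rotation averaging problem min_{R∈SO(3)ⁿ} −⟨RRᵀ, Ã⟩, and the residual angle on every edge equals γ/n. -/
open Matrix

open Real

/-!
Gauge-fix the cycle by the frames `Gᵢ = Rᵢ*`: then `Gᵢᵀ R̃ᵢ,ᵢ₊₁ Gᵢ₊₁ = E₀` on every edge, so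
the candidate has value `n tr E₀`, and for any other point the cost becomes the cyclic form
`∑ᵢ tr(Yᵢᵀ E₀ Yᵢ₊₁)` in the orthogonal matrices `Yᵢ = Gᵢᵀ Qᵢ`. Writing `E₀` as a rotation by
`±γ/n` about an axis, each column of the `Yᵢ` splits into an axial coordinate and a complex
coordinate in the rotation plane, and the cyclic form becomes `Re ∑ᵢ ε z̄ᵢ zᵢ₊₁` with `ε = 1`
resp. `ε = e^{±iγ/n}`. The discrete Fourier transform on `ZMod n` diagonalises this form, with
eigenvalues `Re (ε ωᵏ)`, `ω = e^{2πi/n}`; since `|γ/n| ≤ π/n` the largest is `Re ε` (`k = 0`),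
which bounds the form by its value `∑ᵢ tr(Yᵢᵀ E₀ Yᵢ) = n tr E₀` on the diagonal.
-/

open Complex ZMod ComplexConjugate

section Fourier

variable {n : ℕ} [NeZero n]

lemma sum_stdAddChar_mul_normSq_dft (ζ : ZMod n → ℂ) (t : ZMod n) :
    ∑ k, stdAddChar (t * k) * (normSq (𝓕 ζ k) : ℂ) = n * ∑ j, conj (ζ j) * ζ (j + t) := by
  have horth (j l : ZMod n) :
      ∑ k, stdAddChar ((j - l + t) * k) = if l = j + t then (n : ℂ) else 0 := by
    simp_rw [mul_comm _ (_ : ZMod n)]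
    rw [AddChar.sum_mulShift _ (isPrimitive_stdAddChar n)]
    simp [sub_add_eq_add_sub, sub_eq_zero, eq_comm]
  have hconj (x : ZMod n) : conj (stdAddChar (-x)) = stdAddChar x := by
    rw [← AddChar.map_neg_eq_conj, neg_neg]
  calc ∑ k, stdAddChar (t * k) * (normSq (𝓕 ζ k) : ℂ)
      = ∑ j, ∑ l, (∑ k, stdAddChar ((j - l + t) * k)) * (conj (ζ j) * ζ l) := by
        simp_rw [normSq_eq_conj_mul_self, dft_apply, map_sum, Finset.sum_mul_sum, Finset.mul_sum,
          Finset.sum_mul]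
        rw [Finset.sum_comm]
        refine Finset.sum_congr rfl fun j _ => ?_
        rw [Finset.sum_comm]
        refine Finset.sum_congr rfl fun l _ => Finset.sum_congr rfl fun k _ => ?_
        rw [show (j - l + t) * k = j * k + -(l * k) + t * k by ring, AddChar.map_add_eq_mul,
          AddChar.map_add_eq_mul]
        simp only [smul_eq_mul, map_mul, hconj]
        ring
    _ = n * ∑ j, conj (ζ j) * ζ (j + t) := by
        simp_rw [horth, ite_mul, zero_mul, Finset.sum_ite_eq', Finset.mem_univ, if_true,
          Finset.mul_sum]

lemma re_mul_sum_conj_mul_add_one_le (ε : ℂ) (hε : ∀ k : ZMod n, (ε * stdAddChar k).re ≤ ε.re)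
    (ζ : ZMod n → ℂ) :
    (ε * ∑ j, conj (ζ j) * ζ (j + 1)).re ≤ (ε * ∑ j, conj (ζ j) * ζ j).re := by
  have hspec (t : ZMod n) : (ε * ∑ j, conj (ζ j) * ζ (j + t)).re
      = (n : ℝ)⁻¹ * ∑ k, (ε * stdAddChar (t * k)).re * normSq (𝓕 ζ k) := by
    rw [← inv_mul_cancel_left₀ (Nat.cast_ne_zero.mpr (NeZero.ne n) : (n : ℂ) ≠ 0)
      (∑ j, conj (ζ j) * ζ (j + t)), ← sum_stdAddChar_mul_normSq_dft, mul_left_comm,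
      Finset.mul_sum, ← ofReal_natCast, ← ofReal_inv, re_ofReal_mul, re_sum]
    simp_rw [← mul_assoc, re_mul_ofReal]
  have h := hspec 0
  simp only [add_zero, zero_mul, AddChar.map_zero_eq_one, mul_one] at h
  rw [hspec, h]
  gcongr (n : ℝ)⁻¹ * ?_
  refine Finset.sum_le_sum fun k _ => mul_le_mul_of_nonneg_right ?_ (normSq_nonneg _)
  simpa only [one_mul] using hε k

lemma cos_add_two_pi_mul_div_le {β : ℝ} (hβ : |β| ≤ π / n) {k : ℕ} (hk : k < n) :
    Real.cos (β + 2 * π * k / n) ≤ Real.cos β := by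
  obtain rfl | hk0 := Nat.eq_zero_or_pos k
  · simp
  have hn : (0 : ℝ) < n := Nat.cast_pos.mpr (NeZero.pos n)
  have hkn : (k : ℝ) + 1 ≤ n := by exact_mod_cast hk
  have hk1 : (1 : ℝ) ≤ k := by exact_mod_cast hk0
  have hlow : π / n ≤ π * k / n := by gcongr; exact le_mul_of_one_le_right pi_pos.le hk1
  have hup : π * k / n ≤ π - π / n := by
    rw [div_le_iff₀ hn, sub_mul, div_mul_cancel₀ _ hn.ne']; nlinarith [pi_pos]
  have hβ' := abs_le.mp hβ
  -- `cos β - cos (β + x) = 2 sin (β + x/2) sin (x/2)`, and both angles lie in `[0, π]`.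
  rw [← sub_nonneg, Real.cos_sub_cos, show (β - (β + 2 * π * k / n)) / 2 = -(π * k / n) by ring,
    show (β + (β + 2 * π * k / n)) / 2 = β + π * k / n by ring, Real.sin_neg]
  have hπn : 0 ≤ π / n := div_nonneg pi_pos.le hn.le
  have h1 : 0 ≤ Real.sin (π * k / n) :=
    Real.sin_nonneg_of_nonneg_of_le_pi (by linarith) (by linarith)
  have h2 : 0 ≤ Real.sin (β + π * k / n) :=
    Real.sin_nonneg_of_nonneg_of_le_pi (by linarith) (by linarith)
  nlinarith

lemma re_exp_mul_stdAddChar_le {β : ℝ} (hβ : |β| ≤ π / n) (k : ZMod n) :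
    (exp (β * I) * stdAddChar k).re ≤ (exp (β * I)).re := by
  rw [stdAddChar_apply, toCircle_apply, ← Complex.exp_add,
    show (β : ℂ) * I + 2 * π * I * k.val / n = ((β + 2 * π * k.val / n : ℝ) : ℂ) * I by
      push_cast; ring, exp_ofReal_mul_I_re, exp_ofReal_mul_I_re]
  exact cos_add_two_pi_mul_div_le hβ (ZMod.val_lt k)

end Fourier

section Rotation

def rotX (c s : ℝ) : Matrix (Fin 3) (Fin 3) ℝ := !![1, 0, 0; 0, c, -s; 0, s, c]

lemma trace_rotX (c s : ℝ) : (rotX c s).trace = 1 + 2 * c := by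
  simp [rotX, trace_fin_three, two_mul, add_assoc]

lemma dotProduct_rotX_mulVec (β : ℝ) (x y : Fin 3 → ℝ) :
    x ⬝ᵥ (rotX (Real.cos β) (Real.sin β) *ᵥ y) =
      (conj (x 0 : ℂ) * y 0).re + (exp (β * I) * (conj ⟨x 1, x 2⟩ * ⟨y 1, y 2⟩)).re := by
  simp only [dotProduct, mulVec, rotX, of_apply, cons_val', cons_val_fin_one, Fin.sum_univ_three,
    cons_val_zero, cons_val_one, cons_val, conj_ofReal, mul_re, mul_im, ofReal_re, ofReal_im,
    conj_re, conj_im, exp_ofReal_mul_I_re, exp_ofReal_mul_I_im]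
  ring

lemma eq_rotX_of_mulVec_single {D : Matrix (Fin 3) (Fin 3) ℝ} (hD : Dᵀ * D = 1)
    (hdet : D.det = 1) (hfix : D *ᵥ Pi.single 0 1 = Pi.single 0 1) :
    ∃ c s : ℝ, c ^ 2 + s ^ 2 = 1 ∧ D = rotX c s := by
  have hcol (i : Fin 3) : D i 0 = (Pi.single 0 1 : Fin 3 → ℝ) i := by
    rw [← hfix, mulVec_single_one]; rfl
  obtain ⟨h0, h1, h2⟩ : D 0 0 = 1 ∧ D 1 0 = 0 ∧ D 2 0 = 0 :=
    ⟨by simpa using hcol 0, by simpa using hcol 1, by simpa using hcol 2⟩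
  have hentry (M : Matrix (Fin 3) (Fin 3) ℝ) (h : M = 1) (i j : Fin 3) :
      M i j = (1 : Matrix (Fin 3) (Fin 3) ℝ) i j := by rw [h]
  have hrow0 : D 0 0 ^ 2 + D 0 1 ^ 2 + D 0 2 ^ 2 = 1 := by
    simpa [mul_apply, Fin.sum_univ_three, sq] using hentry _ (mul_eq_one_comm.mp hD) 0 0
  have h01 : D 0 1 = 0 := by nlinarith
  have h02 : D 0 2 = 0 := by nlinarith
  have hcol1 : D 1 1 ^ 2 + D 2 1 ^ 2 = 1 := by
    simpa [mul_apply, Fin.sum_univ_three, sq, h01] using hentry _ hD 1 1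
  have hcol2 : D 1 2 ^ 2 + D 2 2 ^ 2 = 1 := by
    simpa [mul_apply, Fin.sum_univ_three, sq, h02] using hentry _ hD 2 2
  have hdet' : D 1 1 * D 2 2 - D 1 2 * D 2 1 = 1 := by
    simpa [det_fin_three, h0, h1, h2, h01, h02] using hdet
  have hsq : (D 2 2 - D 1 1) ^ 2 + (D 1 2 + D 2 1) ^ 2 = 0 := by
    linear_combination hcol1 + hcol2 - 2 * hdet'
  have hq : D 2 2 = D 1 1 := by nlinarith [sq_nonneg (D 2 2 - D 1 1), sq_nonneg (D 1 2 + D 2 1)]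
  have hp : D 1 2 = -D 2 1 := by nlinarith [sq_nonneg (D 2 2 - D 1 1), sq_nonneg (D 1 2 + D 2 1)]
  refine ⟨D 1 1, D 2 1, hcol1, ?_⟩
  ext i j
  fin_cases i <;> fin_cases j <;> simp [rotX, h0, h1, h2, h01, h02, hq, hp]

section Orthonormal

variable {m : Type*} [Fintype m]

lemma exists_smul_dotProduct_self_eq_one {v : m → ℝ} (hv : v ≠ 0) :
    ∃ r : ℝ, (r • v) ⬝ᵥ (r • v) = 1 := by
  have hpos : 0 < v ⬝ᵥ v := lt_of_le_of_ne (dotProduct_self_star_nonneg v)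
    (fun h => hv (dotProduct_self_eq_zero.mp h.symm))
  refine ⟨(√(v ⬝ᵥ v))⁻¹, ?_⟩
  rw [smul_dotProduct, dotProduct_smul, smul_eq_mul, smul_eq_mul, ← mul_assoc, ← sq, inv_pow,
    sq_sqrt hpos.le, inv_mul_cancel₀ hpos.ne']

lemma det_sub_one_eq_zero_of_odd [DecidableEq m] (hm : Odd (Fintype.card m))
    {E : Matrix m m ℝ} (hE : Eᵀ * E = 1) (hdet : E.det = 1) : (E - 1).det = 0 := by
  have h : Eᵀ * (E - 1) = -(E - 1)ᵀ := by
    rw [mul_sub, hE, mul_one, transpose_sub, transpose_one, neg_sub]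
  have := congrArg det h
  rw [det_mul, det_transpose, hdet, one_mul, det_neg, det_transpose, hm.neg_one_pow] at this
  linarith

lemma exists_mulVec_eq_self_of_odd [DecidableEq m] (hm : Odd (Fintype.card m))
    {E : Matrix m m ℝ} (hE : Eᵀ * E = 1) (hdet : E.det = 1) :
    ∃ u : m → ℝ, u ⬝ᵥ u = 1 ∧ E *ᵥ u = u := by
  obtain ⟨v, hv, hEv⟩ := exists_mulVec_eq_zero_iff.mpr (det_sub_one_eq_zero_of_odd hm hE hdet)
  obtain ⟨r, hr⟩ := exists_smul_dotProduct_self_eq_one hv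
  refine ⟨r • v, hr, ?_⟩
  rw [sub_mulVec, one_mulVec, sub_eq_zero] at hEv
  rw [mulVec_smul, hEv]

lemma exists_dotProduct_self_eq_one_dotProduct_eq_zero [DecidableEq m]
    (hm : 1 < Fintype.card m) {u : m → ℝ} (hu : u ⬝ᵥ u = 1) :
    ∃ w : m → ℝ, w ⬝ᵥ w = 1 ∧ u ⬝ᵥ w = 0 := by
  obtain ⟨i, hi⟩ : ∃ i, u i * u i < 1 := by
    by_contra! h
    have := Finset.card_nsmul_le_sum Finset.univ (fun i => u i * u i) 1 (fun i _ => h i)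
    simp only [dotProduct] at hu
    rw [hu, Finset.card_univ, nsmul_eq_mul, mul_one] at this
    exact absurd this (by exact_mod_cast hm.not_ge)
  set v := Pi.single i 1 - u i • u
  have huv : u ⬝ᵥ v = 0 := by
    simp [v, dotProduct_sub, dotProduct_smul, hu]
  have hv : v ≠ 0 := by
    intro h
    have : v ⬝ᵥ v = 1 - u i * u i := by
      simp [v, sub_dotProduct, dotProduct_sub, dotProduct_smul, smul_dotProduct, hu]
    rw [h, zero_dotProduct] at this
    linarith
  obtain ⟨r, hr⟩ := exists_smul_dotProduct_self_eq_one hv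
  exact ⟨r • v, hr, by rw [dotProduct_smul, huv, smul_zero]⟩

end Orthonormal

lemma of_cross_mul_transpose {u w : Fin 3 → ℝ} (hu : u ⬝ᵥ u = 1) (hw : w ⬝ᵥ w = 1)
    (huw : u ⬝ᵥ w = 0) : of ![u, w, u ⨯₃ w] * (of ![u, w, u ⨯₃ w])ᵀ = 1 := by
  have hcc : (u ⨯₃ w) ⬝ᵥ (u ⨯₃ w) = 1 := by
    rw [cross_dot_cross, hu, hw, huw, dotProduct_comm w u, huw]; ring
  ext i j
  change ![u, w, u ⨯₃ w] i ⬝ᵥ ![u, w, u ⨯₃ w] j = _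
  fin_cases i <;> fin_cases j <;>
    simp [hu, hw, huw, hcc, dotProduct_comm w u, dot_self_cross, dot_cross_self,
      dotProduct_comm (u ⨯₃ w)]

lemma exists_eq_transpose_mul_rotX_mul {E : Matrix (Fin 3) (Fin 3) ℝ} (hE : Eᵀ * E = 1)
    (hdet : E.det = 1) :
    ∃ (M : Matrix (Fin 3) (Fin 3) ℝ) (c s : ℝ),
      Mᵀ * M = 1 ∧ c ^ 2 + s ^ 2 = 1 ∧ E = Mᵀ * rotX c s * M := by
  obtain ⟨u, hu, hEu⟩ := exists_mulVec_eq_self_of_odd (by decide) hE hdet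
  obtain ⟨w, hw, huw⟩ := exists_dotProduct_self_eq_one_dotProduct_eq_zero (by decide) hu
  set M := of ![u, w, u ⨯₃ w]
  have hMMt : M * Mᵀ = 1 := of_cross_mul_transpose hu hw huw
  have hMtM : Mᵀ * M = 1 := mul_eq_one_comm.mp hMMt
  have hMdet : M.det * M.det = 1 := by
    simpa only [det_mul, det_transpose, det_one] using congrArg det hMMt
  obtain ⟨c, s, hcs, hD⟩ : ∃ c s : ℝ, c ^ 2 + s ^ 2 = 1 ∧ M * E * Mᵀ = rotX c s := by
    refine eq_rotX_of_mulVec_single ?_ ?_ ?_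
    · simp only [transpose_mul, transpose_transpose, Matrix.mul_assoc]
      rw [← Matrix.mul_assoc Mᵀ M, hMtM, Matrix.one_mul, ← Matrix.mul_assoc Eᵀ, hE, Matrix.one_mul,
        hMMt]
    · rw [det_mul, det_mul, det_transpose, hdet, mul_one, hMdet]
    · have hMu : M *ᵥ u = Pi.single 0 1 := by
        ext i
        change ![u, w, u ⨯₃ w] i ⬝ᵥ u = _
        fin_cases i <;> simp [hu, dotProduct_comm w u, huw, dotProduct_comm (u ⨯₃ w)]
      have hMtu : Mᵀ *ᵥ Pi.single 0 1 = u := by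
        rw [← hMu, mulVec_mulVec, hMtM, one_mulVec]
      rw [← mulVec_mulVec, ← mulVec_mulVec, hMtu, hEu, hMu]
  refine ⟨M, c, s, hMtM, hcs, ?_⟩
  rw [← hD]
  simp only [← Matrix.mul_assoc, hMtM, Matrix.one_mul]
  rw [Matrix.mul_assoc, hMtM, Matrix.mul_one]

lemma exists_angle_of_cos_eq {c s θ : ℝ} (hcs : c ^ 2 + s ^ 2 = 1) (hc : c = Real.cos θ) :
    ∃ β, |β| = |θ| ∧ c = Real.cos β ∧ s = Real.sin β := by
  have hs : (s - Real.sin θ) * (s + Real.sin θ) = 0 := by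
    linear_combination hcs - congrArg (· ^ 2) hc - Real.sin_sq_add_cos_sq θ
  rcases mul_eq_zero.mp hs with h | h
  · exact ⟨θ, rfl, hc, by linarith⟩
  · exact ⟨-θ, abs_neg θ, by rw [Real.cos_neg, hc], by rw [Real.sin_neg]; linarith⟩

lemma Matrix.trace_transpose_mul_mul {m k R : Type*} [Fintype m] [Fintype k] [CommSemiring R]
    (X : Matrix m k R) (E : Matrix m m R) (X' : Matrix m k R) :
    (Xᵀ * E * X').trace = ∑ a, Xᵀ a ⬝ᵥ (E *ᵥ X'ᵀ a) := by
  simp only [trace, diag, mul_apply, transpose_apply, dotProduct, mulVec, Finset.mul_sum,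
    Finset.sum_mul]
  exact Finset.sum_congr rfl fun a _ => Finset.sum_comm.trans
    (Finset.sum_congr rfl fun _ _ => Finset.sum_congr rfl fun _ _ => by ring)

variable {n : ℕ} [NeZero n]

lemma sum_dotProduct_rotX_mulVec_add_one_le {β : ℝ} (hβ : |β| ≤ π / n)
    (z : ZMod n → Fin 3 → ℝ) :
    ∑ j, z j ⬝ᵥ (rotX (Real.cos β) (Real.sin β) *ᵥ z (j + 1)) ≤
      ∑ j, z j ⬝ᵥ (rotX (Real.cos β) (Real.sin β) *ᵥ z j) := by
  have haxis := re_mul_sum_conj_mul_add_one_le 1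
    (by simpa using re_exp_mul_stdAddChar_le (n := n) (β := 0) (by rw [abs_zero]; positivity))
    fun j => z j 0
  have hplane := re_mul_sum_conj_mul_add_one_le _ (re_exp_mul_stdAddChar_le hβ)
    fun j => ⟨z j 1, z j 2⟩
  simp only [one_mul, re_sum] at haxis
  simp only [Finset.mul_sum, re_sum] at hplane
  simp only [dotProduct_rotX_mulVec, Finset.sum_add_distrib]
  exact add_le_add haxis hplane

lemma sum_trace_mul_add_one_le {E : Matrix (Fin 3) (Fin 3) ℝ} (hE : Eᵀ * E = 1)
    (hdet : E.det = 1) {θ : ℝ} (htr : E.trace = 1 + 2 * Real.cos θ) (hθ : |θ| ≤ π / n)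
    {ι : Type*} [Fintype ι] (Y : ZMod n → Matrix (Fin 3) ι ℝ) :
    ∑ j, ((Y j)ᵀ * E * Y (j + 1)).trace ≤ ∑ j, ((Y j)ᵀ * E * Y j).trace := by
  obtain ⟨M, c, s, hM, hcs, rfl⟩ := exists_eq_transpose_mul_rotX_mul hE hdet
  have hc : c = Real.cos θ := by
    rw [trace_mul_cycle, mul_eq_one_comm.mp hM, Matrix.one_mul, trace_rotX] at htr
    linarith
  obtain ⟨β, hβ, rfl, rfl⟩ := exists_angle_of_cos_eq hcs hc
  have hcol (X X' : Matrix (Fin 3) ι ℝ) :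
      (Xᵀ * (Mᵀ * rotX (Real.cos β) (Real.sin β) * M) * X').trace
        = ∑ a, (M * X)ᵀ a ⬝ᵥ (rotX (Real.cos β) (Real.sin β) *ᵥ (M * X')ᵀ a) := by
    rw [← trace_transpose_mul_mul, transpose_mul]
    simp only [Matrix.mul_assoc]
  simp only [hcol]
  exact Finset.sum_comm.trans_le ((Finset.sum_le_sum fun a _ =>
    sum_dotProduct_rotX_mulVec_add_one_le (hβ.trans_le hθ) fun j => (M * Y j)ᵀ a).trans_eq
      Finset.sum_comm)

end Rotation

section Cycle

lemma Fin.val_add_one_eq_mod {n : ℕ} [NeZero n] (i : Fin n) :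
    ((i + 1 : Fin n) : ℕ) = (i + 1) % n := by
  rw [Fin.val_add, Fin.val_one', Nat.add_mod_mod]

lemma Fin.add_one_add_one_ne_self {n : ℕ} [NeZero n] (hn : 2 < n) (i : Fin n) :
    i + 1 + 1 ≠ i := by
  rw [add_assoc, Ne, add_eq_left, Fin.ext_iff, Fin.val_add, Fin.val_one',
    Nat.mod_eq_of_lt (by omega : 1 < n), Nat.mod_eq_of_lt hn]
  simp

variable {n p : ℕ}

lemma trace_transpose_mul_mul_eq_sum_blk (A : Matrix (Fin n × Fin p) (Fin n × Fin p) ℝ)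
    (S : Matrix (Fin n × Fin p) (Fin p) ℝ) :
    (Sᵀ * A * S).trace = ∑ i, ∑ j, ((blkv S i)ᵀ * blk A i j * blkv S j).trace := by
  simp only [trace, diag, mul_apply, transpose_apply, blk, blkv, Fintype.sum_prod_type,
    Finset.sum_mul]
  conv_lhs => rw [Finset.sum_comm]
  conv_rhs => rw [Finset.sum_comm]
  exact Finset.sum_congr rfl fun j _ =>
    (Finset.sum_congr rfl fun c _ => Finset.sum_comm).trans Finset.sum_comm

variable [NeZero n]

lemma trace_transpose_mul_mul_eq_of_cycle (hn : 2 < n)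
    {Rt : Fin n → Matrix (Fin p) (Fin p) ℝ} {A : Matrix (Fin n × Fin p) (Fin n × Fin p) ℝ}
    (hA : ∀ i j : Fin n, blk A i j =
      if (i.1 + 1) % n = j.1 then Rt i else if (j.1 + 1) % n = i.1 then (Rt j)ᵀ else 0)
    (S : Matrix (Fin n × Fin p) (Fin p) ℝ) :
    (Sᵀ * A * S).trace = 2 * ∑ i, ((blkv S i)ᵀ * Rt i * blkv S (i + 1)).trace := by
  set a : Fin n → ℝ := fun i => ((blkv S i)ᵀ * Rt i * blkv S (i + 1)).trace
  have hsucc (i j : Fin n) : (i.1 + 1) % n = j.1 ↔ j = i + 1 := by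
    rw [Fin.ext_iff, Fin.val_add_one_eq_mod, eq_comm]
  have hterm (i j : Fin n) : ((blkv S i)ᵀ * blk A i j * blkv S j).trace =
      (if j = i + 1 then a i else 0) + (if i = j + 1 then a j else 0) := by
    simp only [hA, hsucc]
    by_cases hj : j = i + 1
    · have hi : i ≠ j + 1 := fun hi => Fin.add_one_add_one_ne_self hn i (by rw [← hj, ← hi])
      rw [if_pos hj, if_pos hj, if_neg hi, add_zero, hj]
    · rw [if_neg hj, if_neg hj, zero_add]
      by_cases hi : i = j + 1
      · rw [if_pos hi, if_pos hi, hi, ← trace_transpose]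
        simp only [a, transpose_mul, transpose_transpose, Matrix.mul_assoc]
      · rw [if_neg hi, if_neg hi, Matrix.mul_zero, Matrix.zero_mul, trace_zero]
  simp only [trace_transpose_mul_mul_eq_sum_blk, hterm, Finset.sum_add_distrib,
    Finset.sum_ite_eq', Finset.mem_univ, if_true]
  rw [Finset.sum_comm (f := fun i j => if i = j + 1 then a j else 0)]
  simp only [Finset.sum_ite_eq', Finset.mem_univ, if_true]
  ring

def pathProd (Rt : Fin n → Matrix (Fin p) (Fin p) ℝ) (m : ℕ) : Matrix (Fin p) (Fin p) ℝ :=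
  ((List.range m).map fun s => Rt ⟨s % n, Nat.mod_lt s (NeZero.pos n)⟩).prod

def cycleGauge (Rt : Fin n → Matrix (Fin p) (Fin p) ℝ) (E : Matrix (Fin p) (Fin p) ℝ) (m : ℕ) :
    Matrix (Fin p) (Fin p) ℝ :=
  (pathProd Rt m)ᵀ * E ^ m

variable {Rt : Fin n → Matrix (Fin p) (Fin p) ℝ} {E : Matrix (Fin p) (Fin p) ℝ}

lemma pathProd_succ (Rt : Fin n → Matrix (Fin p) (Fin p) ℝ) (m : ℕ) :
    pathProd Rt (m + 1) = pathProd Rt m * Rt ⟨m % n, Nat.mod_lt m (NeZero.pos n)⟩ := by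
  simp [pathProd, List.range_succ]

lemma pathProd_self (Rt : Fin n → Matrix (Fin p) (Fin p) ℝ) :
    pathProd Rt n = (List.ofFn Rt).prod := by
  rw [pathProd]
  congr 1
  refine List.ext_getElem (by simp) fun i h _ => ?_
  simp only [List.length_map, List.length_range] at h
  simp [Nat.mod_eq_of_lt h]

lemma transpose_mem_orthogonalGroup {A : Matrix (Fin p) (Fin p) ℝ}
    (hA : A ∈ orthogonalGroup (Fin p) ℝ) : Aᵀ ∈ orthogonalGroup (Fin p) ℝ := by
  rw [mem_orthogonalGroup_iff, transpose_transpose, ← mem_orthogonalGroup_iff']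
  exact hA

lemma pathProd_mem_orthogonalGroup (hRt : ∀ i, Rt i ∈ orthogonalGroup (Fin p) ℝ) (m : ℕ) :
    pathProd Rt m ∈ orthogonalGroup (Fin p) ℝ :=
  Submonoid.list_prod_mem _ (by simp [hRt])

lemma cycleGauge_mem_orthogonalGroup (hRt : ∀ i, Rt i ∈ orthogonalGroup (Fin p) ℝ)
    (hE : E ∈ orthogonalGroup (Fin p) ℝ) (m : ℕ) :
    cycleGauge Rt E m ∈ orthogonalGroup (Fin p) ℝ :=
  mul_mem (transpose_mem_orthogonalGroup (pathProd_mem_orthogonalGroup hRt m)) (pow_mem hE m)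

lemma transpose_cycleGauge_mul_mul (hRt : ∀ i, Rt i ∈ orthogonalGroup (Fin p) ℝ)
    (hE : E ∈ orthogonalGroup (Fin p) ℝ) (m : ℕ) :
    (cycleGauge Rt E m)ᵀ * Rt ⟨m % n, Nat.mod_lt m (NeZero.pos n)⟩ * cycleGauge Rt E (m + 1)
      = E := by
  have hP := (mem_orthogonalGroup_iff _ _).mp (pathProd_mem_orthogonalGroup hRt (m + 1))
  have hEm := (mem_orthogonalGroup_iff' _ _).mp (pow_mem hE m)
  rw [pathProd_succ] at hP
  simp only [cycleGauge, transpose_mul, transpose_transpose, pathProd_succ]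
  calc (E ^ m)ᵀ * pathProd Rt m * Rt ⟨m % n, _⟩ *
        ((Rt ⟨m % n, _⟩)ᵀ * (pathProd Rt m)ᵀ * E ^ (m + 1))
      = (E ^ m)ᵀ * ((pathProd Rt m * Rt ⟨m % n, _⟩) * (pathProd Rt m * Rt ⟨m % n, _⟩)ᵀ) *
          E ^ (m + 1) := by
        simp only [transpose_mul, Matrix.mul_assoc]
    _ = E := by rw [hP, Matrix.mul_one, pow_succ, ← Matrix.mul_assoc, hEm, Matrix.one_mul]

lemma cycleGauge_self (hRt : ∀ i, Rt i ∈ orthogonalGroup (Fin p) ℝ)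
    (hEn : E ^ n = pathProd Rt n) : cycleGauge Rt E n = 1 := by
  rw [cycleGauge, hEn, ← mem_orthogonalGroup_iff']
  exact pathProd_mem_orthogonalGroup hRt n

lemma cycleGauge_val_add_one (hRt : ∀ i, Rt i ∈ orthogonalGroup (Fin p) ℝ)
    (hEn : E ^ n = pathProd Rt n) (i : Fin n) :
    cycleGauge Rt E (i + 1 : Fin n) = cycleGauge Rt E (i + 1) := by
  rw [Fin.val_add_one_eq_mod]
  rcases Nat.lt_or_ge (i + 1) n with h | h
  · rw [Nat.mod_eq_of_lt h]
  · rw [show (i : ℕ) + 1 = n by omega, Nat.mod_self, cycleGauge_self hRt hEn]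
    simp [cycleGauge, pathProd]

lemma transpose_cycleGauge_mul_mul_add_one (hRt : ∀ i, Rt i ∈ orthogonalGroup (Fin p) ℝ)
    (hE : E ∈ orthogonalGroup (Fin p) ℝ) (hEn : E ^ n = pathProd Rt n) (i : Fin n) :
    (cycleGauge Rt E i)ᵀ * Rt i * cycleGauge Rt E (i + 1 : Fin n) = E := by
  have h := transpose_cycleGauge_mul_mul hRt hE i
  rwa [show (⟨i % n, Nat.mod_lt i (NeZero.pos n)⟩ : Fin n) = i from Fin.ext (Nat.mod_eq_of_lt i.2),
    ← cycleGauge_val_add_one hRt hEn] at h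

lemma sum_trace_le_of_gauge {Rt G Q : Fin n → Matrix (Fin 3) (Fin 3) ℝ}
    {E : Matrix (Fin 3) (Fin 3) ℝ} (hE : Eᵀ * E = 1) (hdet : E.det = 1) {θ : ℝ}
    (htr : E.trace = 1 + 2 * Real.cos θ) (hθ : |θ| ≤ π / n)
    (hG : ∀ i, G i ∈ orthogonalGroup (Fin 3) ℝ) (hgauge : ∀ i, (G i)ᵀ * Rt i * G (i + 1) = E)
    (hQ : ∀ i, Q i ∈ orthogonalGroup (Fin 3) ℝ) :
    ∑ i, ((Q i)ᵀ * Rt i * Q (i + 1)).trace ≤ ∑ i, ((G i)ᵀ * Rt i * G (i + 1)).trace := by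
  have hGGt i := (mem_orthogonalGroup_iff _ _).mp (hG i)
  have hRt i : Rt i = G i * E * (G (i + 1))ᵀ := by
    rw [← hgauge i]
    simp only [← Matrix.mul_assoc, hGGt, Matrix.one_mul]
    rw [Matrix.mul_assoc, hGGt, Matrix.mul_one]
  set Y : Fin n → Matrix (Fin 3) (Fin 3) ℝ := fun i => (G i)ᵀ * Q i
  have hY i : Y i * (Y i)ᵀ = 1 := by
    simp only [Y, transpose_mul, transpose_transpose, Matrix.mul_assoc]
    rw [← Matrix.mul_assoc (Q i), (mem_orthogonalGroup_iff _ _).mp (hQ i), Matrix.one_mul,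
      (mem_orthogonalGroup_iff' _ _).mp (hG i)]
  have hshift : ∑ i, ((Y i)ᵀ * E * Y (i + 1)).trace ≤ ∑ i, ((Y i)ᵀ * E * Y i).trace := by
    let e := (ZMod.finEquiv n).symm
    have h := sum_trace_mul_add_one_le hE hdet htr hθ fun j => Y (e j)
    simp only [map_add, map_one] at h
    rwa [Fintype.sum_equiv e.toEquiv (fun j => ((Y (e j))ᵀ * E * Y (e j + 1)).trace)
      (fun i => ((Y i)ᵀ * E * Y (i + 1)).trace) fun _ => rfl,
      Fintype.sum_equiv e.toEquiv (fun j => ((Y (e j))ᵀ * E * Y (e j)).trace)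
      (fun i => ((Y i)ᵀ * E * Y i).trace) fun _ => rfl] at h
  calc ∑ i, ((Q i)ᵀ * Rt i * Q (i + 1)).trace = ∑ i, ((Y i)ᵀ * E * Y (i + 1)).trace := by
        simp only [hRt, Y, transpose_mul, transpose_transpose, Matrix.mul_assoc]
    _ ≤ ∑ i, ((Y i)ᵀ * E * Y i).trace := hshift
    _ = ∑ i, ((G i)ᵀ * Rt i * G (i + 1)).trace := by
        simp only [hgauge, trace_mul_cycle _ E, hY, Matrix.one_mul]

end Cycle

/-- In a cycle graph with `SO(3)` measurements, the point
`Rᵢ* = (∏_{s<i} R̃_{s,s+1})ᵀ E₀ⁱ` (with `R₀* = I`), where `E₀` is the `n`-th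
root of the cycle error with angle `γ/n`, globally minimizes the rotation
averaging cost `-⟨RRᵀ, Ã⟩`, and the residual angle on every edge is `γ/n`. -/
theorem stmt16 (n : ℕ) (hn : 3 ≤ n)
    (Rt : Fin n → Matrix (Fin 3) (Fin 3) ℝ)
    (hRt : ∀ i, (Rt i)ᵀ * Rt i = 1 ∧ (Rt i).det = 1)
    (A : Matrix (Fin n × Fin 3) (Fin n × Fin 3) ℝ)
    (hA : ∀ i j : Fin n, blk A i j =
      if (i.1 + 1) % n = j.1 then Rt i
      else if (j.1 + 1) % n = i.1 then (Rt j)ᵀ else 0)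
    (γ : ℝ) (hγ : γ ∈ Set.Icc (-π) π)
    (E0 : Matrix (Fin 3) (Fin 3) ℝ)
    (hE0so : E0ᵀ * E0 = 1 ∧ E0.det = 1)
    (hE0n : E0 ^ n = (List.ofFn Rt).prod)
    (hE0tr : E0.trace = 1 + 2 * Real.cos (γ / n))
    (Rstar : Fin n → Matrix (Fin 3) (Fin 3) ℝ)
    (hRstar : ∀ i : Fin n, Rstar i =
      (((List.range i.1).map fun s => Rt ⟨s % n, Nat.mod_lt s (by omega)⟩).prod)ᵀ *
        E0 ^ i.1)
    (Rb : Matrix (Fin n × Fin 3) (Fin 3) ℝ)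
    (hRb : ∀ (i : Fin n) (a b : Fin 3), Rb (i, a) b = Rstar i a b) :
    (∀ Q : Matrix (Fin n × Fin 3) (Fin 3) ℝ,
        (∀ i : Fin n, (blkv Q i)ᵀ * blkv Q i = 1 ∧ (blkv Q i).det = 1) →
        -(Rbᵀ * A * Rb).trace ≤ -(Qᵀ * A * Q).trace) ∧
    (∀ i : Fin n,
      (Rt i * Rstar ⟨(i.1 + 1) % n, Nat.mod_lt _ (by omega)⟩ * (Rstar i)ᵀ).trace =
        1 + 2 * Real.cos (γ / n)) := by
  have : NeZero n := ⟨by omega⟩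
  have hRtO i : Rt i ∈ orthogonalGroup (Fin 3) ℝ := (mem_orthogonalGroup_iff' _ _).mpr (hRt i).1
  have hE0O : E0 ∈ orthogonalGroup (Fin 3) ℝ := (mem_orthogonalGroup_iff' _ _).mpr hE0so.1
  have hRs i : Rstar i = cycleGauge Rt E0 i := hRstar i
  have hgauge i : (Rstar i)ᵀ * Rt i * Rstar (i + 1) = E0 := by
    rw [hRs, hRs]
    exact transpose_cycleGauge_mul_mul_add_one hRtO hE0O (by rw [hE0n, pathProd_self]) i
  have hsucc (i : Fin n) : (⟨(i.1 + 1) % n, Nat.mod_lt _ (by omega)⟩ : Fin n) = i + 1 :=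
    Fin.ext (Fin.val_add_one_eq_mod i).symm
  refine ⟨fun Q hQ => ?_, fun i => ?_⟩
  · have hRbv : blkv Rb = Rstar := funext fun i => Matrix.ext (hRb i)
    have hγn : |γ / n| ≤ π / n := by
      rw [abs_div, Nat.abs_cast]
      gcongr
      exact abs_le.mpr hγ
    rw [neg_le_neg_iff, trace_transpose_mul_mul_eq_of_cycle (by omega) hA,
      trace_transpose_mul_mul_eq_of_cycle (by omega) hA, hRbv]
    gcongr 2 * ?_
    exact sum_trace_le_of_gauge hE0so.1 hE0so.2 hE0tr hγn
      (fun i => hRs i ▸ cycleGauge_mem_orthogonalGroup hRtO hE0O i) hgauge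
      fun i => (mem_orthogonalGroup_iff' _ _).mpr (hQ i).1
  · rw [hsucc, trace_mul_comm, ← Matrix.mul_assoc, hgauge, hE0tr]
end

section
/- The orthogonal projection of a matrix X ∈ ℝ^{p×p} with SVD X = UΣVᵀ onto SO(p), i.e., the minimizer of ‖X − R‖_F over R ∈ SO(p), is R = U·diag(1,…,1, det(UVᵀ))·Vᵀ, provided the two smallest singular values of X are distinct or det(UVᵀ) = 1. -/
open Matrix

section Stmt18Aux

lemma stmt18_diag_le_one {p : ℕ} (M : Matrix (Fin p) (Fin p) ℝ) (hM : Mᵀ * M = 1) (i : Fin p) :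
    M i i ≤ 1 := by
  have h : ∑ j, M j i * M j i = 1 := by
    have := congrFun (congrFun hM i) i
    simpa [Matrix.mul_apply, Matrix.one_apply, Matrix.transpose_apply] using this
  have h1 : M i i * M i i ≤ 1 := by
    rw [← h]
    exact Finset.single_le_sum (fun j _ => mul_self_nonneg (M j i)) (Finset.mem_univ i)
  nlinarith

lemma stmt18_exists_eig {p : ℕ} (M : Matrix (Fin p) (Fin p) ℝ) (hM : Mᵀ * M = 1)
    (hdet : M.det = -1) :
    ∃ v : Fin p → ℝ, v ⬝ᵥ v = 1 ∧ M *ᵥ v = -v ∧ Mᵀ *ᵥ v = -v := by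
  have hdet0 : (M + 1).det = 0 := by
    have h1 : Mᵀ * (M + 1) = (M + 1)ᵀ := by
      rw [Matrix.mul_add, hM, Matrix.transpose_add, Matrix.transpose_one, Matrix.mul_one,
        add_comm]
    have h2 : Mᵀ.det * (M + 1).det = (M + 1).det := by
      rw [← Matrix.det_mul, h1, Matrix.det_transpose]
    rw [Matrix.det_transpose, hdet] at h2
    linarith
  obtain ⟨v, hv0, hv⟩ := Matrix.exists_mulVec_eq_zero_iff.mpr hdet0
  have hMv : M *ᵥ v = -v := by
    rw [Matrix.add_mulVec, Matrix.one_mulVec] at hv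
    exact eq_neg_of_add_eq_zero_left hv
  have hMtv : Mᵀ *ᵥ v = -v := by
    have : Mᵀ *ᵥ (M *ᵥ v) = v := by
      rw [Matrix.mulVec_mulVec, hM, Matrix.one_mulVec]
    rw [hMv, Matrix.mulVec_neg] at this
    linear_combination (norm := module) -this
  have hn : 0 < v ⬝ᵥ v := by
    have hnn : 0 ≤ v ⬝ᵥ v := Finset.sum_nonneg fun j _ => mul_self_nonneg (v j)
    rcases lt_or_eq_of_le hnn with h | h
    · exact h
    · exact absurd ((dotProduct_self_eq_zero).mp h.symm) hv0
  set c : ℝ := (Real.sqrt (v ⬝ᵥ v))⁻¹ with hc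
  have hcc : c * c * (v ⬝ᵥ v) = 1 := by
    rw [hc, ← mul_inv, Real.mul_self_sqrt hn.le]
    field_simp
  refine ⟨c • v, ?_, ?_, ?_⟩
  · rw [smul_dotProduct, dotProduct_smul, smul_eq_mul, smul_eq_mul, ← mul_assoc,
      hcc]
  · rw [Matrix.mulVec_smul, hMv, smul_neg]
  · rw [Matrix.mulVec_smul, hMtv, smul_neg]

lemma stmt18_key_bound {p : ℕ} (M : Matrix (Fin p) (Fin p) ℝ) (hM : Mᵀ * M = 1)
    (v : Fin p → ℝ) (hv : v ⬝ᵥ v = 1) (h2 : Mᵀ *ᵥ v = -v)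
    (i : Fin p) : M i i ≤ 1 - 2 * v i ^ 2 := by
  have S1 : ∑ j, v j ^ 2 = 1 := by
    simpa [dotProduct, pow_two] using hv
  have S2 : ∑ j, M j i * v j = -v i := by
    have := congrFun h2 i
    simpa [Matrix.mulVec, dotProduct, Matrix.transpose_apply] using this
  have S3 : ∑ j, M j i ^ 2 = 1 := by
    have := congrFun (congrFun hM i) i
    simpa [Matrix.mul_apply, Matrix.one_apply, Matrix.transpose_apply, pow_two] using this
  have hvi : v i ^ 2 ≤ 1 := by
    rw [← S1]
    exact Finset.single_le_sum (fun j _ => sq_nonneg (v j)) (Finset.mem_univ i)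
  set f : Fin p → ℝ := fun j => (if j = i then (1:ℝ) else 0) - v i * v j with hf
  set g : Fin p → ℝ := fun j => M j i + v i * v j with hg
  have hcs := Finset.sum_mul_sq_le_sq_mul_sq Finset.univ f g
  have hA : ∑ j, f j * g j = M i i + v i ^ 2 := by
    have : ∀ j, f j * g j = (if j = i then M j i + v i * v j else 0)
        - (v i * (M j i * v j)) - v i ^ 2 * v j ^ 2 := by
      intro j
      by_cases h : j = i <;> simp [hf, hg, h] <;> ring
    rw [Finset.sum_congr rfl (fun j _ => this j)]
    rw [Finset.sum_sub_distrib, Finset.sum_sub_distrib, Finset.sum_ite_eq' Finset.univ i,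
      ← Finset.mul_sum, ← Finset.mul_sum, S2, S1]
    simp
    ring
  have hB : ∑ j, f j ^ 2 = 1 - v i ^ 2 := by
    have : ∀ j, f j ^ 2 = (if j = i then 1 - 2 * (v i * v j) else 0) + v i ^ 2 * v j ^ 2 := by
      intro j
      by_cases h : j = i <;> simp [hf, h] <;> ring
    rw [Finset.sum_congr rfl (fun j _ => this j)]
    rw [Finset.sum_add_distrib, Finset.sum_ite_eq' Finset.univ i, ← Finset.mul_sum, S1]
    simp
    ring
  have hC : ∑ j, g j ^ 2 = 1 - v i ^ 2 := by
    have : ∀ j, g j ^ 2 = M j i ^ 2 + 2 * (v i * (M j i * v j)) + v i ^ 2 * v j ^ 2 := by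
      intro j; simp [hg]; ring
    rw [Finset.sum_congr rfl (fun j _ => this j)]
    rw [Finset.sum_add_distrib, Finset.sum_add_distrib, ← Finset.mul_sum, ← Finset.mul_sum,
      ← Finset.mul_sum, S1, S2, S3]
    ring
  rw [hA, hB, hC] at hcs
  nlinarith [hcs, hvi, sq_nonneg (M i i + v i ^ 2 + (1 - v i ^ 2)),
    sq_nonneg (M i i + v i ^ 2 - (1 - v i ^ 2))]

lemma stmt18_main_ineq {p : ℕ} (σ : Fin p → ℝ) (hσnn : ∀ i, 0 ≤ σ i)
    (l : Fin p) (hl : ∀ i, σ l ≤ σ i)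
    (M : Matrix (Fin p) (Fin p) ℝ)
    (v : Fin p → ℝ) (hv : v ⬝ᵥ v = 1)
    (hkey : ∀ i, M i i ≤ 1 - 2 * v i ^ 2) :
    ∑ i, σ i * M i i ≤ (∑ i ∈ Finset.univ.erase l, σ i) - σ l := by
  have S1 : ∑ j, v j ^ 2 = 1 := by
    simpa [dotProduct, pow_two] using hv
  have hvS : ∑ i ∈ Finset.univ.erase l, v i ^ 2 = 1 - v l ^ 2 := by
    rw [Finset.sum_erase_eq_sub (Finset.mem_univ l), S1]
  have hsplit : ∑ i, σ i * M i i
      = (∑ i ∈ Finset.univ.erase l, σ i * M i i) + σ l * M l l :=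
    (Finset.sum_erase_add _ _ (Finset.mem_univ l)).symm
  have hterm : ∀ i ∈ Finset.univ.erase l, σ i * M i i ≤ σ i - 2 * σ l * v i ^ 2 := by
    intro i _
    have h1 : σ i * M i i ≤ σ i * (1 - 2 * v i ^ 2) :=
      mul_le_mul_of_nonneg_left (hkey i) (hσnn i)
    have h2' : σ l * v i ^ 2 ≤ σ i * v i ^ 2 :=
      mul_le_mul_of_nonneg_right (hl i) (sq_nonneg _)
    nlinarith
  have hsum : ∑ i ∈ Finset.univ.erase l, σ i * M i i
      ≤ (∑ i ∈ Finset.univ.erase l, σ i) - 2 * σ l * (1 - v l ^ 2) := by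
    calc ∑ i ∈ Finset.univ.erase l, σ i * M i i
        ≤ ∑ i ∈ Finset.univ.erase l, (σ i - 2 * σ l * v i ^ 2) :=
          Finset.sum_le_sum hterm
      _ = (∑ i ∈ Finset.univ.erase l, σ i) - 2 * σ l * (1 - v l ^ 2) := by
          rw [Finset.sum_sub_distrib, ← Finset.mul_sum, hvS]
  have hlast : σ l * M l l ≤ σ l * (1 - 2 * v l ^ 2) :=
    mul_le_mul_of_nonneg_left (hkey l) (hσnn l)
  rw [hsplit]
  nlinarith [hσnn l]

lemma stmt18_expand {p : ℕ} (X A : Matrix (Fin p) (Fin p) ℝ) (hA : Aᵀ * A = 1) :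
    ((X - A)ᵀ * (X - A)).trace = (Xᵀ * X).trace + (p : ℝ) - 2 * (Aᵀ * X).trace := by
  have h1 : (Xᵀ * A).trace = (Aᵀ * X).trace := by
    rw [← Matrix.trace_transpose (Xᵀ * A), Matrix.transpose_mul, Matrix.transpose_transpose]
  rw [Matrix.transpose_sub, Matrix.sub_mul, Matrix.mul_sub, Matrix.mul_sub, hA]
  rw [Matrix.trace_sub, Matrix.trace_sub, Matrix.trace_sub, Matrix.trace_one, h1]
  simp [Fintype.card_fin]
  ring

end Stmt18Aux

/-- The orthogonal projection onto `SO(p)` of `X = U Σ Vᵀ` is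
`R = U diag(1,…,1, det(UVᵀ)) Vᵀ`, provided the two smallest singular values are
distinct or `det(UVᵀ) = 1`: `R ∈ SO(p)` and `R` minimizes `‖X - Q‖_F` over
`Q ∈ SO(p)`. -/
theorem stmt18 {p : ℕ} (hp : 1 ≤ p)
    (X U V : Matrix (Fin p) (Fin p) ℝ) (σ : Fin p → ℝ)
    (hU : Uᵀ * U = 1) (hV : Vᵀ * V = 1)
    (hσnn : ∀ i, 0 ≤ σ i)
    (hsort : ∀ i j : Fin p, i ≤ j → σ j ≤ σ i)
    (hX : X = U * Matrix.diagonal σ * Vᵀ)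
    (hcond : (U * Vᵀ).det = 1 ∨
      ∃ _ : 2 ≤ p, σ ⟨p - 2, by omega⟩ ≠ σ ⟨p - 1, by omega⟩) :
    let R := U * Matrix.diagonal
      (fun i : Fin p => if i.1 = p - 1 then (U * Vᵀ).det else 1) * Vᵀ
    (Rᵀ * R = 1 ∧ R.det = 1) ∧
      ∀ Q : Matrix (Fin p) (Fin p) ℝ, Qᵀ * Q = 1 → Q.det = 1 →
        ((X - R)ᵀ * (X - R)).trace ≤ ((X - Q)ᵀ * (X - Q)).trace := by
  have hVV : V * Vᵀ = 1 := mul_eq_one_comm.mp hV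
  set ε : ℝ := (U * Vᵀ).det with hε
  have hdetU : U.det * U.det = 1 := by
    have := congrArg Matrix.det hU
    rwa [Matrix.det_mul, Matrix.det_transpose, Matrix.det_one] at this
  have hdetV : V.det * V.det = 1 := by
    have := congrArg Matrix.det hV
    rwa [Matrix.det_mul, Matrix.det_transpose, Matrix.det_one] at this
  have hεUV : ε = U.det * V.det := by
    rw [hε, Matrix.det_mul, Matrix.det_transpose]
  have hε2 : ε * ε = 1 := by rw [hεUV]; nlinarith
  have hεcase : ε = 1 ∨ ε = -1 := mul_self_eq_one_iff.mp hε2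
  intro R
  set l : Fin p := ⟨p - 1, by omega⟩ with hldef
  have hiff : ∀ i : Fin p, i.1 = p - 1 ↔ i = l := by
    intro i
    constructor
    · intro h; exact Fin.ext h
    · intro h; rw [h]
  set d : Fin p → ℝ := fun i => if i.1 = p - 1 then ε else 1 with hd
  have hRdef : R = U * Matrix.diagonal d * Vᵀ := rfl
  have hdd : ∀ i, d i * d i = 1 := by
    intro i
    by_cases h : i.1 = p - 1 <;> simp [hd, h, hε2]
  have hDD : Matrix.diagonal d * Matrix.diagonal d = 1 := by
    rw [Matrix.diagonal_mul_diagonal]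
    rw [show (fun i => d i * d i) = fun _ => (1 : ℝ) from funext fun i => hdd i]
    exact Matrix.diagonal_one
  have hRTR : Rᵀ * R = 1 := by
    rw [hRdef]
    have e : (U * Matrix.diagonal d * Vᵀ)ᵀ * (U * Matrix.diagonal d * Vᵀ)
        = V * (Matrix.diagonal d * (Uᵀ * (U * (Matrix.diagonal d * Vᵀ)))) := by
      simp only [Matrix.transpose_mul, Matrix.transpose_transpose, Matrix.diagonal_transpose,
        Matrix.mul_assoc]
    rw [e, ← Matrix.mul_assoc Uᵀ U, hU, Matrix.one_mul,
      ← Matrix.mul_assoc (Matrix.diagonal d) (Matrix.diagonal d), hDD, Matrix.one_mul, hVV]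
  have hprodd : (∏ i, d i) = ε := by
    calc (∏ i, d i) = ∏ i, (if i = l then ε else 1) := by
          refine Finset.prod_congr rfl fun i _ => ?_
          simp only [hd, hiff i]
      _ = ε := by simp
  have hRdet : R.det = 1 := by
    rw [hRdef, Matrix.det_mul, Matrix.det_mul, Matrix.det_transpose, Matrix.det_diagonal,
      hprodd]
    have : U.det * ε * V.det = ε * ε := by rw [hεUV]; ring
    rw [this, hε2]
  refine ⟨⟨hRTR, hRdet⟩, ?_⟩
  intro Q hQ hQdet
  have hQQ : Q * Qᵀ = 1 := mul_eq_one_comm.mp hQ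
  set M : Matrix (Fin p) (Fin p) ℝ := Vᵀ * Qᵀ * U with hMdef
  have hMtM : Mᵀ * M = 1 := by
    have e : Mᵀ * M = Uᵀ * (Q * ((V * Vᵀ) * (Qᵀ * U))) := by
      simp only [hMdef, Matrix.transpose_mul, Matrix.transpose_transpose, Matrix.mul_assoc]
    rw [e, hVV, Matrix.one_mul, ← Matrix.mul_assoc Q Qᵀ U, hQQ, Matrix.one_mul, hU]
  have hMdet : M.det = ε := by
    rw [hMdef, Matrix.det_mul, Matrix.det_mul, Matrix.det_transpose, Matrix.det_transpose,
      hQdet, hεUV]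
    ring
  have htrQ : (Qᵀ * X).trace = ∑ i, σ i * M i i := by
    rw [hX]
    have e1 : Qᵀ * (U * Matrix.diagonal σ * Vᵀ) = (Qᵀ * U * Matrix.diagonal σ) * Vᵀ := by
      simp only [Matrix.mul_assoc]
    rw [e1, Matrix.trace_mul_comm]
    have e2 : Vᵀ * (Qᵀ * U * Matrix.diagonal σ) = M * Matrix.diagonal σ := by
      simp only [hMdef, Matrix.mul_assoc]
    rw [e2, Matrix.trace_mul_comm]
    simp [Matrix.trace, Matrix.diag, Matrix.diagonal_mul]
  have htrR : (Rᵀ * X).trace = ∑ i, σ i * d i := by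
    rw [hRdef, hX]
    have e : (U * Matrix.diagonal d * Vᵀ)ᵀ * (U * Matrix.diagonal σ * Vᵀ)
        = V * (Matrix.diagonal d * (Uᵀ * (U * (Matrix.diagonal σ * Vᵀ)))) := by
      simp only [Matrix.transpose_mul, Matrix.transpose_transpose, Matrix.diagonal_transpose,
        Matrix.mul_assoc]
    rw [e, ← Matrix.mul_assoc Uᵀ U, hU, Matrix.one_mul, Matrix.trace_mul_comm]
    have e2 : Matrix.diagonal d * (Matrix.diagonal σ * Vᵀ) * V
        = Matrix.diagonal d * Matrix.diagonal σ * (Vᵀ * V) := by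
      simp only [Matrix.mul_assoc]
    rw [e2, hV, Matrix.mul_one, Matrix.diagonal_mul_diagonal, Matrix.trace_diagonal]
    exact Finset.sum_congr rfl fun i _ => mul_comm (d i) (σ i)
  have hineq : ∑ i, σ i * M i i ≤ ∑ i, σ i * d i := by
    rcases hεcase with hε1 | hεm1
    · have hd1 : ∀ i, d i = 1 := by intro i; by_cases h : i.1 = p - 1 <;> simp [hd, h, hε1]
      calc ∑ i, σ i * M i i ≤ ∑ i, σ i * 1 := by
            refine Finset.sum_le_sum fun i _ => ?_
            exact mul_le_mul_of_nonneg_left (stmt18_diag_le_one M hMtM i) (hσnn i)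
        _ = ∑ i, σ i * d i := by
            exact Finset.sum_congr rfl fun i _ => by rw [hd1 i]
    · obtain ⟨v, hv1, _, hvt⟩ := stmt18_exists_eig M hMtM (by rw [hMdet, hεm1])
      have hkey := fun i => stmt18_key_bound M hMtM v hv1 hvt i
      have hl : ∀ i, σ l ≤ σ i := by
        intro i
        refine hsort i l ?_
        rw [Fin.le_def]
        have := i.isLt
        simp only [hldef]
        omega
      have hmain := stmt18_main_ineq σ hσnn l hl M v hv1 hkey
      have hrhs : ∑ i, σ i * d i = (∑ i ∈ Finset.univ.erase l, σ i) - σ l := by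
        rw [← Finset.sum_erase_add _ _ (Finset.mem_univ l)]
        have e1 : ∀ i ∈ Finset.univ.erase l, σ i * d i = σ i := by
          intro i hi
          have hne : i ≠ l := Finset.ne_of_mem_erase hi
          have : ¬ i.1 = p - 1 := fun hc => hne ((hiff i).mp hc)
          simp [hd, this]
        have e2 : σ l * d l = -σ l := by
          have : (l : Fin p).1 = p - 1 := rfl
          simp [hd, this, hεm1]
        rw [Finset.sum_congr rfl e1, e2]
        ring
      rw [hrhs]
      exact hmain
  rw [stmt18_expand X R hRTR, stmt18_expand X Q hQ]
  have hTR : (Rᵀ * X).trace ≥ (Qᵀ * X).trace := by rw [htrQ, htrR]; exact hineq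
  linarith
end
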